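/- arXiv:2303.08894 — 5 statements merged into one kernel-verified Lean document; each statement's English description precedes it below -/
import Mathlib

section
/- For lists c, a, b (over any type) with |a| = ℓ, and indices i < j < |c|, the list obtained by splicing a into c at position i and then splicing b at position ℓ-1+j equals the list obtained by splicing b into c at position j and then splicing a at position i. Here splicing b into c at position k means (first k entries of c) ++ b ++ (entries of c after position k). -/
def splice {T : Type*} (cl bl : List T) (k : ℕ) : List T :=
  cl.take k ++ bl ++ cl.drop (k+1)


theorem horizontal_splice_eq {T : Type*} (cl al bl : List T) (ℓ i j : ℕ)
    (hl : al.length = ℓ) (hl1 : 1 ≤ ℓ) (hij : i < j) (hj : j < cl.length) :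
    splice (splice cl al i) bl (ℓ - 1 + j) = splice (splice cl bl j) al i := by
  have hi : i < cl.length := lt_trans hij hj
  have m1 : min i cl.length = i := by omega
  have m2 : min j cl.length = j := by omega
  simp only [splice, List.take_append, List.drop_append,
    List.length_take, List.length_append, List.take_take, List.drop_take, hl, m1, m2]
  rw [show (ℓ - 1 + j) ⊓ i = i by omega,
      show ℓ - 1 + j - (i + ℓ) = j - i - 1 by omega,
      show ℓ - 1 + j + 1 - (i + ℓ) = j - i by omega,
      show i - (ℓ - 1 + j + 1) = 0 by omega,
      show i - j = 0 by omega,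
      show i - (j + bl.length) = 0 by omega,
      show i + 1 - j = 0 by omega,
      show i + 1 - (j + bl.length) = 0 by omega,
      show j - (i + 1) = j - i - 1 by omega,
      show i ⊓ j = i by omega,
      List.take_of_length_le (by omega : al.length ≤ ℓ - 1 + j - i),
      List.drop_eq_nil_of_le (by omega : al.length ≤ ℓ - 1 + j + 1 - i),
      List.drop_drop, show i + 1 + (j - i) = j + 1 by omega]
  simp
end

section
/- For lists c, b, a with |b| = m, and indices i < |c|, j < |b|, splicing (b •ⱼ a) into c at position i equals first splicing b into c at position i and then splicing a at position i+j: c •ᵢ (b •ⱼ a) = (c •ᵢ b) •ᵢ₊ⱼ a. -/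
theorem vertical_splice_eq {T : Type*} (cl bl al : List T) (m i j : ℕ)
    (hm : bl.length = m) (hm1 : 1 ≤ m) (hi : i < cl.length) (hj : j < m) :
    splice cl (splice bl al j) i = splice (splice cl bl i) al (i + j) := by
  subst hm
  simp only [splice, List.append_assoc, List.take_append,
    List.drop_append, List.length_take, min_eq_left hi.le,
    Nat.sub_eq_zero_of_le hj.le, List.take_zero, List.nil_append,
    show i + j + 1 - i = j + 1 from by omega,
    show j + 1 - bl.length = 0 from by omega,
    Nat.add_sub_cancel_left, min_eq_right (Nat.le_add_right i j),
    List.take_take, min_eq_left (Nat.le_add_right i j), List.drop_zero,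
    List.drop_eq_nil_of_le (by simp; omega : (List.take i cl).length ≤ i + j + 1)]
end

section
/- Right unity for the composition of curried functions: for any list of types c with i < |c| and cᵢ the i-th entry of c, and α : arr c d, composing α at position i with the identity function id : cᵢ → cᵢ yields α, after casting along the list equality c •ᵢ [cᵢ] = c. -/
def arr : List Type → Type → Type
  | [], d => d
  | t :: ts, d => t → arr ts d

def mapArr {t t' : Type} (f : t → t') : ∀ {bl : List Type}, arr bl t → arr bl t'
  | [], g => f g
  | _ :: _, g => fun y => mapArr f (g y)

def compose : ∀ {cl bl : List Type} {t t' : Type},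
    arr cl (t → t') → arr bl t → arr cl (arr bl t')
  | [], _, _, _, f, g => mapArr f g
  | _ :: _, _, _, _, f, g => fun x => compose (f x) g

theorem list_split {T : Type*} (cl : List T) (i : ℕ) (h : i < cl.length) :
    cl.take i ++ cl[i] :: cl.drop (i+1) = cl := by
  conv_rhs => rw [← List.take_append_drop i cl, List.drop_eq_getElem_cons h]

theorem arr_append (l1 l2 : List Type) (d : Type) :
    arr (l1 ++ l2) d = arr l1 (arr l2 d) := by
  induction l1 with
  | nil => rfl
  | cons t ts ih => exact congrArg (fun X => t → X) ih

theorem arr_eq_split (cl : List Type) (d : Type) (i : ℕ) (hi : i < cl.length) :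
    arr cl d = arr (cl.take i) (cl[i] → arr (cl.drop (i+1)) d) := by
  conv_lhs => rw [← list_split cl i hi]
  rw [arr_append]
  rfl

theorem arr_splice_eq (cl bl : List Type) (d : Type) (i : ℕ) :
    arr (splice cl bl i) d = arr (cl.take i) (arr bl (arr (cl.drop (i+1)) d)) := by
  simp [splice, arr_append]

def ocomp {cl bl : List Type} {d ci : Type} (i : ℕ) (hi : i < cl.length)
    (hci : cl[i] = ci) (α : arr cl d) (β : arr bl ci) : arr (splice cl bl i) d :=
  cast (arr_splice_eq cl bl d i).symm
    (compose (cast (by rw [arr_eq_split cl d i hi, hci]) α) β)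

theorem compose_id : ∀ {cl : List Type} {t t' : Type} (f : arr cl (t → t')),
    compose (bl := [t]) f (id : t → t) = f
  | [], _, _, _ => funext fun _ => rfl
  | _ :: _, _, _, f => funext fun x => compose_id (f x)

theorem right_unity_ocomp {cl : List Type} {d : Type} (i : ℕ) (hi : i < cl.length)
    (α : arr cl d) (hsp : splice cl [cl[i]] i = cl) :
    cast (congrArg (fun l => arr l d) hsp)
      (ocomp i hi rfl α (id : cl[i] → cl[i])) = α := by
  rw [cast_eq_iff_heq]
  unfold ocomp
  refine (cast_heq _ _).trans ?_
  rw [compose_id]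
  exact cast_heq _ _
end

section
/- Vertical associativity for curried function composition: for α : arr c d, β : arr b cᵢ, γ : arr a bⱼ, with i < |c|, j < |b|, cᵢ the i-th entry of c, and bⱼ the j-th entry of b, one has (α ∘ᵢ β) ∘_{i+j} γ = α ∘ᵢ (β ∘ⱼ γ), after casting along the list equality (c •ᵢ b) •_{i+j} a = c •ᵢ (b •ⱼ a). -/
/-
Read every cast as a heterogeneous equality; then the two sides can be compared without
transporting along the list equation. Induction on `i` strips the common leading arguments
(`ocomp_succ`). At `i = 0` the inner composite is `mapArr α β`, and induction on `j` reduces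
the claim to `mapArr α` commuting with `∘ⱼ γ`; at `j = 0` this is the associativity of
`mapArr`, proved by induction on the arguments of `γ`.
-/

theorem heq_apply.{u, v} {t : Sort u} {A B : Sort v} (hAB : A = B) {f : t → A} {g : t → B}
    (h : f ≍ g) (x : t) : f x ≍ g x := by
  subst hAB
  cases h
  rfl

theorem funext_heq.{u, v} {t : Sort u} {A B : Sort v} {f : t → A} {g : t → B}
    (h : ∀ x, f x ≍ g x) : f ≍ g :=
  Function.hfunext rfl fun x _ hx => by
    cases hx
    exact h x

theorem ocomp_zero_heq {c d : Type} {cs bl : List Type} (hi : 0 < (c :: cs).length)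
    (α : arr (c :: cs) d) (β : arr bl c) : ocomp 0 hi rfl α β ≍ mapArr α β :=
  cast_heq _ _

-- Both sides have the same type: `splice (c :: cs) bl (k + 1)` reduces to `c :: splice cs bl k`.
theorem ocomp_succ {c d ci : Type} {cs bl : List Type} {k : ℕ} (hk : k + 1 < (c :: cs).length)
    (hci : (c :: cs)[k + 1] = ci) (α : arr (c :: cs) d) (β : arr bl ci) :
    ocomp (k + 1) hk hci α β = fun x => ocomp k (Nat.lt_of_succ_lt_succ hk) hci (α x) β := by
  have hk' : k < cs.length := Nat.lt_of_succ_lt_succ hk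
  have hci' : cs[k] = ci := hci
  have hsplit : arr cs d = arr (cs.take k) (ci → arr (cs.drop (k + 1)) d) := by
    rw [arr_eq_split cs d k hk', hci']
  funext x
  unfold ocomp
  refine eq_of_heq ((heq_apply (t := c) (A := arr (splice cs bl k) d)
    (B := arr (cs.take k) (arr bl (arr (cs.drop (k + 1)) d)))
    (arr_splice_eq cs bl d k) (cast_heq _ _) x).trans ?_)
  refine HEq.trans ?_ (cast_heq _ _).symm
  have hα : cast (congrArg (c → ·) hsplit) α x = cast hsplit (α x) :=
    eq_of_heq ((heq_apply hsplit.symm (cast_heq _ _) x).trans (cast_heq _ _).symm)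
  exact heq_of_eq (congrArg (compose · β) hα)

theorem mapArr_assoc_heq {b c d : Type} {bs cs : List Type} {α : c → arr cs d}
    {β : arr (b :: bs) c} {F : b → arr (bs ++ cs) d} (hF : F ≍ mapArr α β) :
    ∀ {al : List Type} (γ : arr al b) {G : arr (al ++ bs) c}, G ≍ mapArr β γ →
      mapArr F γ ≍ mapArr α G
  | [], γ, G, hG => by
    cases eq_of_heq hG
    exact heq_apply (arr_append bs cs d) hF γ
  | a :: as, γ, G, hG =>
    funext_heq fun y => mapArr_assoc_heq hF (γ y) (heq_apply (arr_append as bs c) hG y)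

theorem ocomp_mapArr_heq {c d : Type} {cs : List Type} (α : c → arr cs d) :
    ∀ {bl al : List Type} {j : ℕ} (hj : j < bl.length) (h1 : j < (bl ++ cs).length)
      (h2 : (bl ++ cs)[j] = bl[j]) (β : arr bl c) (γ : arr al bl[j]) {F : arr (bl ++ cs) d},
      F ≍ mapArr α β → ocomp j h1 h2 F γ ≍ mapArr α (ocomp j hj rfl β γ)
  | [], _, _, hj, _, _, _, _, _, _ => absurd hj (Nat.not_lt_zero _)
  | b :: bs, _, 0, hj, h1, _, β, γ, F, hF =>
    (ocomp_zero_heq h1 F γ).trans (mapArr_assoc_heq hF γ (ocomp_zero_heq hj β γ))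
  | b :: bs, _, k + 1, hj, h1, h2, β, γ, F, hF => by
    rw [ocomp_succ h1, ocomp_succ hj]
    exact funext_heq fun y => ocomp_mapArr_heq α (Nat.lt_of_succ_lt_succ hj)
      (Nat.lt_of_succ_lt_succ h1) h2 (β y) γ (heq_apply (arr_append bs cs d) hF y)

-- The outer index is a separate `m` because `0 + j` and `i + 1 + j` are not definitionally
-- `j` and `i + j + 1`.
theorem ocomp_assoc_heq {d : Type} :
    ∀ {cl bl al : List Type} {i j m : ℕ}, m = i + j →
      ∀ (hi : i < cl.length) (hj : j < bl.length)
      (h1 : m < (splice cl bl i).length) (h2 : (splice cl bl i)[m] = bl[j])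
      (α : arr cl d) (β : arr bl cl[i]) (γ : arr al bl[j]),
      ocomp m h1 h2 (ocomp i hi rfl α β) γ ≍ ocomp i hi rfl α (ocomp j hj rfl β γ)
  | [], _, _, _, _, _, _, hi, _, _, _, _, _, _ => absurd hi (Nat.not_lt_zero _)
  | _ :: _, _, _, 0, j, m, hm, hi, hj, h1, h2, α, β, γ => by
    obtain rfl : m = j := by omega
    exact (ocomp_mapArr_heq α hj h1 h2 β γ (ocomp_zero_heq hi α β)).trans
      (ocomp_zero_heq hi α _).symm
  | _ :: cs, bl, _, i + 1, j, m, hm, hi, hj, h1, h2, α, β, γ => by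
    obtain rfl : m = i + j + 1 := by omega
    have hleft : ocomp (i + j + 1) h1 h2 (ocomp (i + 1) hi rfl α β) γ = fun x =>
        ocomp (i + j) (Nat.lt_of_succ_lt_succ h1) h2
          (ocomp i (Nat.lt_of_succ_lt_succ hi) rfl (α x) β) γ :=
      (ocomp_succ (cs := splice cs bl i) h1 h2 _ γ).trans (by rw [ocomp_succ hi]; rfl)
    rw [hleft, ocomp_succ hi]
    exact funext_heq fun x => ocomp_assoc_heq rfl _ hj _ h2 (α x) β γ

theorem vertical_assoc_ocomp {cl bl al : List Type} {d : Type} {i j : ℕ}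
    (hi : i < cl.length) (hj : j < bl.length)
    (h1 : i + j < (splice cl bl i).length) (h2 : (splice cl bl i)[i+j] = bl[j])
    (hle : splice (splice cl bl i) al (i + j) = splice cl (splice bl al j) i)
    (α : arr cl d) (β : arr bl cl[i]) (γ : arr al bl[j]) :
    cast (congrArg (fun l => arr l d) hle)
      (ocomp (i + j) h1 h2 (ocomp i hi rfl α β) γ) =
    ocomp i hi rfl α (ocomp j hj rfl β γ) :=
  eq_of_heq ((cast_heq _ _).trans (ocomp_assoc_heq rfl hi hj h1 h2 α β γ))
end

section
/- Horizontal associativity for curried function composition: for α : arr c d, β : arr a cᵢ, γ : arr b cⱼ, with i < j < |c|, |a| = ℓ ≥ 1, cᵢ and cⱼ the i-th and j-th entries of c respectively, one has (α ∘ᵢ β) ∘_{ℓ-1+j} γ = (α ∘ⱼ γ) ∘ᵢ β, after casting along the list equality (c •ᵢ a) •_{ℓ-1+j} b = (c •ⱼ b) •ᵢ a. -/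
/-!
Peeling off a common first argument turns every composite into the same construction on the
tail (`ocomp_succ_cons`), so one inducts on `i`. For `i = 0`, grafting `β` into the first slot is
`mapArr α β` up to a cast, and grafting `γ` behind the block of new arguments commutes with
`mapArr` (`ocomp_add_length`): both sides become `mapArr (fun x => α x ∘_{j-1} γ) β`.
-/

-- `h'` is a separate argument: `X = Y` cannot be recovered from it (`→` is not provably injective).
theorem cast_fun {σ X Y : Sort _} (h : X = Y) (h' : (σ → X) = (σ → Y)) (f : σ → X) :
    cast h' f = fun x => cast h (f x) := by
  subst h; rfl

theorem mapArr_mapArr {t t' t'' : Type} (f : t → t') (g : t' → t'') :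
    ∀ {bl : List Type} (β : arr bl t), mapArr g (mapArr f β) = mapArr (g ∘ f) β
  | [], _ => rfl
  | _ :: _, β => funext fun y => mapArr_mapArr f g (β y)

theorem splice_append_add_length {T : Type*} (A L B : List T) (k : ℕ) :
    splice (A ++ L) B (k + A.length) = A ++ splice L B k := by
  simp only [splice, Nat.add_comm k, Nat.add_assoc, List.take_length_add_append,
    List.drop_length_add_append, List.append_assoc]

theorem ocomp_zero_cons_heq {c : Type} {cl bl : List Type} {d : Type}
    (h0 : 0 < (c :: cl).length) (hc : (c :: cl)[0] = c) (α : arr (c :: cl) d) (β : arr bl c) :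
    ocomp 0 h0 hc α β ≍ mapArr α β :=
  cast_heq _ _

theorem ocomp_succ_cons {s : Type} {cl bl : List Type} {d ci : Type} (i : ℕ)
    (hi : i + 1 < (s :: cl).length) (hci : (s :: cl)[i + 1] = ci)
    (α : arr (s :: cl) d) (β : arr bl ci) :
    ocomp (i + 1) hi hci α β = fun x => ocomp i (Nat.lt_of_succ_lt_succ hi) hci (α x) β := by
  subst hci
  refine (cast_fun (σ := s) (arr_splice_eq cl bl d i).symm _ _).trans (funext fun x => ?_)
  exact congrArg (cast _) (congrArg (compose · β)
    (congrFun (cast_fun (σ := s) (arr_eq_split cl d i (Nat.lt_of_succ_lt_succ hi)) _ α) x))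

theorem ocomp_add_length {L bl : List Type} {d ci : Type} {k : ℕ} (hk : k < L.length)
    (hci : L[k] = ci) (γ : arr bl ci) : ∀ (A : List Type) (F : arr A (arr L d)),
    ocomp (k + A.length) (by simpa [Nat.add_comm] using hk)
        ((List.getElem_append_right' A hk).symm.trans hci) (cast (arr_append A L d).symm F) γ =
      cast (by rw [splice_append_add_length, arr_append])
        (mapArr (fun g => ocomp k hk hci g γ) F)
  | [], F => eq_of_heq (cast_heq _ _).symm
  | s :: A, F => by
    have hF : cast (arr_append (s :: A) L d).symm F
        = fun x => cast (arr_append A L d).symm (F x) := cast_fun _ _ F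
    have hX : arr A (arr (splice L bl k) d) = arr (splice (A ++ L) bl (k + A.length)) d := by
      rw [splice_append_add_length, arr_append]
    rw [hF]
    refine (ocomp_succ_cons (k + A.length) _ _ _ _).trans ?_
    refine Eq.trans ?_ (cast_fun (σ := s) hX _ _).symm
    funext x
    exact ocomp_add_length hk hci γ A (F x)

-- The index `k` is kept free so that the base case can substitute `k := (j - 1) + al.length`,
-- the shape `ocomp_add_length` expects.
theorem horizontal_assoc_ocomp_of_add_one_eq {al bl : List Type} {d : Type} (i : ℕ) :
    ∀ {cl : List Type} {j k : ℕ} (hij : i < j) (hj : j < cl.length),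
    k + 1 = al.length + j → ∀ (h1 : k < (splice cl al i).length)
    (h2 : (splice cl al i)[k] = cl[j]) (h3 : i < (splice cl bl j).length)
    (h4 : (splice cl bl j)[i] = cl[i]'(hij.trans hj))
    (hle : splice (splice cl al i) bl k = splice (splice cl bl j) al i)
    (α : arr cl d) (β : arr al (cl[i]'(hij.trans hj))) (γ : arr bl cl[j]),
    cast (congrArg (fun l => arr l d) hle)
      (ocomp k h1 h2 (ocomp i (hij.trans hj) rfl α β) γ) =
    ocomp i h3 h4 (ocomp j hj rfl α γ) β := by
  induction i with
  | zero =>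
    intro cl j k hij hj hk h1 h2 h3 h4 hle α β γ
    obtain ⟨j, rfl⟩ := Nat.exists_eq_add_one_of_ne_zero hij.ne'
    obtain ⟨c, cl, rfl⟩ := List.exists_cons_of_length_pos (hij.trans hj)
    obtain rfl : k = j + al.length := by omega
    have hj' : j < cl.length := Nat.lt_of_succ_lt_succ hj
    have hinner : ocomp 0 (hij.trans hj) rfl α β = cast (arr_append al cl d).symm (mapArr α β) :=
      eq_of_heq ((ocomp_zero_cons_heq _ rfl α β).trans (cast_heq _ _).symm)
    have hleft : ocomp (j + al.length) h1 h2 (ocomp 0 (hij.trans hj) rfl α β) γ ≍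
        mapArr (fun x => ocomp j hj' rfl (α x) γ) β := by
      rw [hinner]
      exact (heq_of_eq (ocomp_add_length hj' (rfl : cl[j] = (c :: cl)[j + 1]) γ al _)).trans
        ((cast_heq _ _).trans (heq_of_eq (mapArr_mapArr _ _ β)))
    have hright : ocomp 0 h3 h4 (ocomp (j + 1) hj rfl α γ) β ≍
        mapArr (fun x => ocomp j hj' rfl (α x) γ) β := by
      rw [ocomp_succ_cons]
      exact ocomp_zero_cons_heq h3 h4 _ β
    exact eq_of_heq ((cast_heq _ _).trans (hleft.trans hright.symm))
  | succ i ih =>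
    intro cl j k hij hj hk h1 h2 h3 h4 hle α β γ
    obtain ⟨j, rfl⟩ := Nat.exists_eq_add_one_of_ne_zero (Nat.zero_lt_of_lt hij).ne'
    obtain ⟨k, rfl⟩ := Nat.exists_eq_add_one_of_ne_zero (show k ≠ 0 by omega)
    obtain ⟨s, cl, rfl⟩ := List.exists_cons_of_length_pos ((Nat.zero_lt_of_lt hij).trans hj)
    have hleft : ocomp (k + 1) h1 h2 (ocomp (i + 1) (hij.trans hj) rfl α β) γ =
        fun x => ocomp k (Nat.lt_of_succ_lt_succ h1) h2
          (ocomp i (Nat.lt_of_succ_lt_succ (hij.trans hj)) rfl (α x) β) γ := by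
      rw [ocomp_succ_cons]
      exact ocomp_succ_cons k h1 h2 _ γ
    have hright : ocomp (i + 1) h3 h4 (ocomp (j + 1) hj rfl α γ) β =
        fun x => ocomp i (Nat.lt_of_succ_lt_succ h3) h4
          (ocomp j (Nat.lt_of_succ_lt_succ hj) rfl (α x) γ) β := by
      rw [ocomp_succ_cons]
      exact ocomp_succ_cons i h3 h4 _ β
    have hle' : splice (splice cl al i) bl k = splice (splice cl bl j) al i :=
      List.cons_injective (a := s) hle
    rw [hleft, hright]
    refine (cast_fun (congrArg (fun l => arr l d) hle') _ _).trans (funext fun x => ?_)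
    exact ih (Nat.lt_of_succ_lt_succ hij) (Nat.lt_of_succ_lt_succ hj) (by omega) _ _ _ _ hle' _ _ _


theorem horizontal_assoc_ocomp {cl al bl : List Type} {d : Type} {i j ℓ : ℕ}
    (hij : i < j) (hj : j < cl.length) (hl : al.length = ℓ) (hl1 : 1 ≤ ℓ)
    (h1 : ℓ - 1 + j < (splice cl al i).length)
    (h2 : (splice cl al i)[ℓ - 1 + j] = cl[j])
    (h3 : i < (splice cl bl j).length)
    (h4 : (splice cl bl j)[i] = cl[i]'(lt_trans hij hj))
    (hle : splice (splice cl al i) bl (ℓ - 1 + j) = splice (splice cl bl j) al i)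
    (α : arr cl d) (β : arr al (cl[i]'(lt_trans hij hj))) (γ : arr bl cl[j]) :
    cast (congrArg (fun l => arr l d) hle)
      (ocomp (ℓ - 1 + j) h1 h2 (ocomp i (lt_trans hij hj) rfl α β) γ) =
    ocomp i h3 h4 (ocomp j hj rfl α γ) β :=
  horizontal_assoc_ocomp_of_add_one_eq i hij hj (by omega) h1 h2 h3 h4 hle α β γ
end
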